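/- arXiv:math/0202275 — 7 statements merged into one kernel-verified Lean document; each statement's English description precedes it below -/
import Mathlib

section
/- Let δ₅ = [[2,5],[5,13]] ∈ SL(2,ℤ). Then the subgroup Γ₀⁰(5) of SL(2,ℤ) equals the subgroup generated by the principal congruence subgroup Γ(5) together with δ₅. -/
open Matrix CongruenceSubgroup
open scoped MatrixGroups

/-- `Γ₀⁰(N)`: the subgroup of `SL(2, ℤ)` of matrices whose upper-right and lower-left
entries are both `≡ 0 mod N`. -/
def Gamma00 (N : ℕ) : Subgroup SL(2, ℤ) where
  carrier := { g | (g 0 1 : ZMod N) = 0 ∧ (g 1 0 : ZMod N) = 0 }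
  one_mem' := by simp
  mul_mem' := by
    intro a b ha hb
    have h1 := (Matrix.two_mul_expl a.1 b.1).2.1
    have h2 := (Matrix.two_mul_expl a.1 b.1).2.2.1
    simp only [Set.mem_setOf_eq, Matrix.SpecialLinearGroup.coe_mul] at *
    rw [h1, h2]
    push_cast
    rw [ha.1, ha.2, hb.1, hb.2]
    simp
  inv_mem' := by
    intro a ha
    simp only [Set.mem_setOf_eq] at *
    rw [Matrix.SpecialLinearGroup.SL2_inv_expl a]
    simpa using ⟨ha.1, ha.2⟩

/-- `δ₅ = [[2,5],[5,13]] ∈ SL(2, ℤ)`. -/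
def delta5 : SL(2, ℤ) :=
  ⟨!![2, 5; 5, 13], by norm_num [Matrix.det_fin_two_of]⟩

namespace Gamma00Aux

lemma key : ∀ a d : ZMod 5, a * d = 1 → ∃ k : Fin 4, a = 2^(k:ℕ) ∧ d = 3^(k:ℕ) := by decide

noncomputable def F : SL(2,ℤ) →* SL(2, ZMod 5) :=
  @Matrix.SpecialLinearGroup.map (Fin 2) _ _ _ _ _ _ (Int.castRingHom (ZMod 5))

def D : SL(2, ZMod 5) := ⟨Matrix.diagonal ![2,3], by simp [Matrix.det_diagonal]; decide⟩

lemma F_delta5 : F delta5 = D := by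
  ext i j
  fin_cases i <;> fin_cases j <;> simp [F, delta5, D, Matrix.diagonal] <;> decide

lemma D_pow (k : ℕ) : ((D ^ k : SL(2, ZMod 5)) : Matrix (Fin 2) (Fin 2) (ZMod 5))
    = Matrix.diagonal ![2^k, 3^k] := by
  rw [Matrix.SpecialLinearGroup.coe_pow, D]
  show (Matrix.diagonal ![2,3]) ^ k = _
  rw [Matrix.diagonal_pow]
  funext i
  fin_cases i <;> rfl

lemma gamma_mem5 {g : SL(2,ℤ)} (h : F g = 1) : g ∈ Gamma 5 := h

end Gamma00Aux

open Gamma00Aux in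
/-- `Γ₀⁰(5)` is generated by the principal congruence subgroup `Γ(5)` together with `δ₅`. -/
theorem gamma00_five_eq_closure :
    Gamma00 5 = Subgroup.closure ((Gamma 5 : Set SL(2, ℤ)) ∪ {delta5}) := by
  refine le_antisymm ?_ ((Subgroup.closure_le _).2 (Set.union_subset ?_ ?_))
  · intro g hg
    obtain ⟨hb, hc⟩ : ((g 0 1 : ℤ) : ZMod 5) = 0 ∧ ((g 1 0 : ℤ) : ZMod 5) = 0 := hg
    have hdet : g.1.det = 1 := g.2
    rw [Matrix.det_fin_two] at hdet
    have had : ((g 0 0 : ℤ) : ZMod 5) * ((g 1 1 : ℤ) : ZMod 5) = 1 := by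
      have := congrArg (fun z : ℤ => (z : ZMod 5)) hdet
      push_cast at this
      rw [hb, hc] at this
      simpa using this
    obtain ⟨k, ha, hd⟩ := key _ _ had
    have hF : F g = D ^ (k : ℕ) := by
      apply Subtype.ext
      rw [D_pow]
      ext i j
      fin_cases i <;> fin_cases j <;>
        simp [F, Matrix.diagonal, hb, hc, ha, hd]
    have hmem : g * (delta5 ^ (k : ℕ))⁻¹ ∈ Gamma 5 := by
      apply gamma_mem5
      rw [_root_.map_mul, _root_.map_inv, _root_.map_pow, F_delta5, hF, mul_inv_cancel]
    have hgeq : g = (g * (delta5 ^ (k : ℕ))⁻¹) * delta5 ^ (k : ℕ) := (inv_mul_cancel_right g _).symm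
    rw [hgeq]
    refine mul_mem (Subgroup.subset_closure (Set.mem_union_left _ hmem))
      (pow_mem (Subgroup.subset_closure (Set.mem_union_right _ ?_)) _)
    exact Set.mem_singleton _
  · intro g hg
    rw [SetLike.mem_coe, Gamma_mem] at hg
    exact ⟨hg.2.1, hg.2.2.1⟩
  · intro g hg
    rw [Set.mem_singleton_iff] at hg
    subst hg
    constructor <;> (show ((_ : ℤ) : ZMod 5) = 0) <;> simp [delta5] <;> decide
end

section
/- Let δ₇ = [[2,7],[7,25]] ∈ SL(2,ℤ). Then the subgroup Γ₀⁰(7) of SL(2,ℤ) equals the subgroup generated by the principal congruence subgroup Γ(7) together with δ₇ and the negative identity matrix −I. -/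
open Matrix CongruenceSubgroup
open scoped MatrixGroups

/-- `δ₇ = [[2,7],[7,25]] ∈ SL(2, ℤ)`. -/
def delta7 : SL(2, ℤ) :=
  ⟨!![2, 7; 7, 25], by norm_num [Matrix.det_fin_two_of]⟩

/-- `−I ∈ SL(2, ℤ)`. -/
def negI : SL(2, ℤ) :=
  ⟨!![-1, 0; 0, -1], by norm_num [Matrix.det_fin_two_of]⟩

lemma mem_closure_of_red (g t : SL(2,ℤ)) (S : Set SL(2,ℤ)) (hGS : (Gamma 7 : Set SL(2,ℤ)) ⊆ S)
    (ht : t ∈ Subgroup.closure S)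
    (h : ∀ i j, ((g i j : ZMod 7)) = ((t i j : ZMod 7))) :
    g ∈ Subgroup.closure S := by
  have hker : g * t⁻¹ ∈ Gamma 7 := by
    rw [Gamma_mem']
    have heq : SpecialLinearGroup.map (Int.castRingHom (ZMod 7)) g
        = SpecialLinearGroup.map (Int.castRingHom (ZMod 7)) t := by
      ext i j
      simpa using h i j
    rw [_root_.map_mul, _root_.map_inv, heq, mul_inv_cancel]
  have hm : g * t⁻¹ ∈ Subgroup.closure S := Subgroup.subset_closure (hGS hker)
  have := mul_mem hm ht
  simpa using this

/-- `Γ₀⁰(7)` is generated by the principal congruence subgroup `Γ(7)` together with `δ₇`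
and `−I`. -/
theorem gamma00_seven_eq_closure :
    Gamma00 7 = Subgroup.closure ((Gamma 7 : Set SL(2, ℤ)) ∪ {delta7, negI}) := by
  set S := ((Gamma 7 : Set SL(2, ℤ)) ∪ {delta7, negI}) with hS
  apply le_antisymm
  · intro g hg
    obtain ⟨h01, h10⟩ := hg
    have hGS : (Gamma 7 : Set SL(2,ℤ)) ⊆ S := Set.subset_union_left
    have hd : delta7 ∈ Subgroup.closure S :=
      Subgroup.subset_closure (Or.inr (by simp))
    have hn : negI ∈ Subgroup.closure S :=
      Subgroup.subset_closure (Or.inr (by simp))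
    have hdet : ((g 0 0 : ZMod 7)) * (g 1 1 : ZMod 7) = 1 := by
      have h := g.2
      rw [Matrix.det_fin_two] at h
      have h2 : ((g 0 0 * g 1 1 - g 0 1 * g 1 0 : ℤ) : ZMod 7) = 1 := by
        rw [h]; norm_num
      push_cast at h2
      rw [h01, h10] at h2
      simpa using h2
    have h7 : (7 : ZMod 7) = 0 := by decide
    have hcases : ∀ x : ZMod 7, x = 0 ∨ x = 1 ∨ x = 2 ∨ x = 3 ∨ x = 4 ∨ x = 5 ∨ x = 6 := by
      decide
    rcases hcases (g 0 0 : ZMod 7) with ha | ha | ha | ha | ha | ha | ha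
    · rw [ha, zero_mul] at hdet; exact absurd hdet (by decide)
    · refine mem_closure_of_red g 1 S hGS (one_mem _) ?_
      have hd11 : (g 1 1 : ZMod 7) = 1 := by linear_combination hdet - (g 1 1 : ZMod 7) * ha
      intro i j
      fin_cases i <;> fin_cases j <;>
        simp_all
    · refine mem_closure_of_red g delta7 S hGS hd ?_
      have hd11 : (g 1 1 : ZMod 7) = 4 := by linear_combination 4 * hdet - 4 * (g 1 1 : ZMod 7) * ha - (g 1 1 : ZMod 7) * h7
      intro i j
      fin_cases i <;> fin_cases j <;>
        norm_num [delta7, ha, hd11, h01, h10] <;> decide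
    · refine mem_closure_of_red g (delta7 * delta7 * negI) S hGS (mul_mem (mul_mem hd hd) hn) ?_
      have hd11 : (g 1 1 : ZMod 7) = 5 := by linear_combination 5 * hdet - 5 * (g 1 1 : ZMod 7) * ha - 2 * (g 1 1 : ZMod 7) * h7
      intro i j
      fin_cases i <;> fin_cases j <;>
        norm_num [delta7, negI, Matrix.SpecialLinearGroup.coe_mul, Matrix.mul_apply,
          Fin.sum_univ_succ, ha, hd11, h01, h10] <;> decide
    · refine mem_closure_of_red g (delta7 * delta7) S hGS (mul_mem hd hd) ?_
      have hd11 : (g 1 1 : ZMod 7) = 2 := by linear_combination 2 * hdet - 2 * (g 1 1 : ZMod 7) * ha - (g 1 1 : ZMod 7) * h7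
      intro i j
      fin_cases i <;> fin_cases j <;>
        norm_num [delta7, Matrix.SpecialLinearGroup.coe_mul, Matrix.mul_apply,
          Fin.sum_univ_succ, ha, hd11, h01, h10] <;> decide
    · refine mem_closure_of_red g (delta7 * negI) S hGS (mul_mem hd hn) ?_
      have hd11 : (g 1 1 : ZMod 7) = 3 := by linear_combination 3 * hdet - 3 * (g 1 1 : ZMod 7) * ha - 2 * (g 1 1 : ZMod 7) * h7
      intro i j
      fin_cases i <;> fin_cases j <;>
        norm_num [delta7, negI, Matrix.SpecialLinearGroup.coe_mul, Matrix.mul_apply,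
          Fin.sum_univ_succ, ha, hd11, h01, h10] <;> decide
    · refine mem_closure_of_red g negI S hGS hn ?_
      have hd11 : (g 1 1 : ZMod 7) = 6 := by linear_combination 6 * hdet - 6 * (g 1 1 : ZMod 7) * ha - 5 * (g 1 1 : ZMod 7) * h7
      intro i j
      fin_cases i <;> fin_cases j <;>
        norm_num [negI, ha, hd11, h01, h10] <;> decide
  · rw [Subgroup.closure_le]
    rintro x (hx | hx)
    · rw [SetLike.mem_coe, Gamma_mem] at hx
      exact ⟨hx.2.1, hx.2.2.1⟩
    · rcases hx with rfl | rfl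
      · exact ⟨by decide, by decide⟩
      · exact ⟨by decide, by decide⟩
end

section
/- Let δ₁₁ = [[−40,−11],[11,3]] ∈ SL(2,ℤ). Then the subgroup Γ₀⁰(11) of SL(2,ℤ) equals the subgroup generated by the principal congruence subgroup Γ(11) together with δ₁₁ and the negative identity matrix −I. -/
open Matrix CongruenceSubgroup
open scoped MatrixGroups

/-- `δ₁₁ = [[−40,−11],[11,3]] ∈ SL(2, ℤ)`. -/
def delta11 : SL(2, ℤ) :=
  ⟨!![-40, -11; 11, 3], by norm_num [Matrix.det_fin_two_of]⟩

/-!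
Reduction mod 11 maps `Γ₀⁰(11)` into the diagonal torus `{diag(u, u⁻¹)}` of `SL(2, 𝔽₁₁)`, and its
kernel `Γ(11)` lies in the closure. The torus is cyclic, isomorphic to `𝔽₁₁ˣ`, and `−δ₁₁` reduces to
`diag(7, 8) = diag(7, 7⁻¹)`; since 7 is a primitive root mod 11 this generates the torus, so every
`g ∈ Γ₀⁰(11)` is `(−δ₁₁)ᵏ` times an element of `Γ(11)`.
-/

namespace Matrix.SpecialLinearGroup

variable {R : Type*} [CommRing R]

def diagUnits : Rˣ →* SL(2, R) where
  toFun u := ⟨!![(u : R), 0; 0, ↑u⁻¹], by simp [det_fin_two_of]⟩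
  map_one' := by ext i j; fin_cases i <;> fin_cases j <;> simp
  map_mul' u v := by
    ext i j
    change _ = (!![(u : R), 0; 0, ↑u⁻¹] * !![(v : R), 0; 0, ↑v⁻¹]) i j
    fin_cases i <;> fin_cases j <;> simp [mul_comm]

@[simp]
lemma coe_diagUnits (u : Rˣ) :
    (diagUnits u : Matrix (Fin 2) (Fin 2) R) = !![(u : R), 0; 0, ↑u⁻¹] := rfl

lemma mem_range_diagUnits {g : SL(2, R)} (h01 : g 0 1 = 0) (h10 : g 1 0 = 0) :
    g ∈ (diagUnits : Rˣ →* SL(2, R)).range := by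
  have hdet : g 0 0 * g 1 1 = 1 := by
    have := g.det_coe
    rwa [det_fin_two, h01, zero_mul, sub_zero] at this
  refine ⟨⟨g 0 0, g 1 1, hdet, by rw [mul_comm, hdet]⟩, ?_⟩
  ext i j
  fin_cases i <;> fin_cases j <;> simp [h01, h10]

lemma range_diagUnits_eq_zpowers {u : Rˣ} (hu : Subgroup.zpowers u = ⊤) :
    (diagUnits : Rˣ →* SL(2, R)).range = Subgroup.zpowers (diagUnits u) := by
  rw [MonoidHom.range_eq_map, ← hu, MonoidHom.map_zpowers]

end Matrix.SpecialLinearGroup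

open Matrix.SpecialLinearGroup

lemma Gamma_le_Gamma00 (N : ℕ) : Gamma N ≤ Gamma00 N := fun _ hg ↦
  ⟨(Gamma_mem.1 hg).2.1, (Gamma_mem.1 hg).2.2.1⟩

lemma map_Gamma00_le_range_diagUnits (N : ℕ) :
    (Gamma00 N).map (map (Int.castRingHom (ZMod N))) ≤
      (diagUnits : (ZMod N)ˣ →* SL(2, ZMod N)).range := by
  rintro _ ⟨g, ⟨h01, h10⟩, rfl⟩
  exact mem_range_diagUnits h01 h10

instance fact_prime_eleven : Fact (Nat.Prime 11) := ⟨by norm_num⟩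

lemma isPrimitiveRoot_seven_zmod_eleven : IsPrimitiveRoot (7 : ZMod 11) 10 :=
  .mk_of_lt _ (by norm_num) (by decide) fun l hl hl10 ↦ by interval_cases l <;> decide

lemma zpowers_seven_units_zmod_eleven_eq_top : Subgroup.zpowers (⟨7, 8, by decide, by decide⟩ : (ZMod 11)ˣ) = ⊤ := by
  rw [(IsPrimitiveRoot.coe_units_iff.1 isPrimitiveRoot_seven_zmod_eleven).zpowers_eq]
  exact eq_top_iff.2 fun v _ ↦ (mem_rootsOfUnity _ _).2 (ZMod.units_pow_card_sub_one_eq_one 11 v)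

lemma coe_negI_mul_delta11 :
    ((negI * delta11 : SL(2, ℤ)) : Matrix (Fin 2) (Fin 2) ℤ) = !![40, 11; -11, -3] := by
  rw [coe_mul]
  simp [negI, delta11]

lemma map_negI_mul_delta11 :
    map (Int.castRingHom (ZMod 11)) (negI * delta11) = diagUnits ⟨7, 8, by decide, by decide⟩ := by
  ext i j
  fin_cases i <;> fin_cases j <;>
    simp only [SL_reduction_mod_hom_val, coe_negI_mul_delta11, coe_diagUnits] <;> decide

/-- `Γ₀⁰(11)` is generated by the principal congruence subgroup `Γ(11)` together with `δ₁₁`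
and `−I`. -/
theorem gamma00_eleven_eq_closure :
    Gamma00 11 = Subgroup.closure ((Gamma 11 : Set SL(2, ℤ)) ∪ {delta11, negI}) := by
  set φ := map (n := Fin 2) (Int.castRingHom (ZMod 11))
  set H := Subgroup.closure ((Gamma 11 : Set SL(2, ℤ)) ∪ {delta11, negI})
  have hker : φ.ker ≤ H := fun g hg ↦ Subgroup.subset_closure (.inl hg)
  have hτ : negI * delta11 ∈ H :=
    mul_mem (Subgroup.subset_closure (.inr (.inr rfl))) (Subgroup.subset_closure (.inr (.inl rfl)))
  refine le_antisymm ?_ (Subgroup.closure_le _ |>.2 ?_)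
  · have hmap : (Gamma00 11).map φ ≤ H.map φ := calc
      (Gamma00 11).map φ ≤ (diagUnits : (ZMod 11)ˣ →* SL(2, ZMod 11)).range :=
        map_Gamma00_le_range_diagUnits 11
      _ = Subgroup.zpowers (φ (negI * delta11)) := by
        rw [map_negI_mul_delta11, range_diagUnits_eq_zpowers zpowers_seven_units_zmod_eleven_eq_top]
      _ ≤ H.map φ := Subgroup.zpowers_le.2 (Subgroup.mem_map_of_mem φ hτ)
    rw [← Subgroup.comap_map_eq_self hker]
    exact Subgroup.map_le_iff_le_comap.1 hmap
  · rintro g (hg | rfl | rfl)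
    · exact Gamma_le_Gamma00 11 hg
    · exact ⟨by decide, by decide⟩
    · exact ⟨by decide, by decide⟩
end

section
/- Let δ₁₃ = [[85,13],[13,2]] ∈ SL(2,ℤ). Then the subgroup Γ₀⁰(13) of SL(2,ℤ) equals the subgroup generated by the principal congruence subgroup Γ(13) together with δ₁₃. -/
open Matrix CongruenceSubgroup
open scoped MatrixGroups

/-- `δ₁₃ = [[85,13],[13,2]] ∈ SL(2, ℤ)`. -/
def delta13 : SL(2, ℤ) :=
  ⟨!![85, 13; 13, 2], by norm_num [Matrix.det_fin_two_of]⟩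

lemma delta13_pow_entries (k : ℕ) :
    ((delta13 ^ k) 0 0 : ZMod 13) = 7 ^ k ∧ ((delta13 ^ k) 0 1 : ZMod 13) = 0 ∧
    ((delta13 ^ k) 1 0 : ZMod 13) = 0 ∧ ((delta13 ^ k) 1 1 : ZMod 13) = 2 ^ k := by
  induction k with
  | zero => simp
  | succ n ih =>
    obtain ⟨h1, h2, h3, h4⟩ := ih
    have e := Matrix.two_mul_expl (delta13 ^ n).1 delta13.1
    have hd : (delta13 ^ (n + 1)).1 = (delta13 ^ n).1 * delta13.1 := by
      rw [pow_succ]; rfl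
    have e00 : (delta13 ^ (n+1)) 0 0 = (delta13 ^ n) 0 0 * 85 + (delta13 ^ n) 0 1 * 13 := by
      rw [hd] at *; simpa [delta13] using e.1
    have e01 : (delta13 ^ (n+1)) 0 1 = (delta13 ^ n) 0 0 * 13 + (delta13 ^ n) 0 1 * 2 := by
      rw [hd] at *; simpa [delta13] using e.2.1
    have e10 : (delta13 ^ (n+1)) 1 0 = (delta13 ^ n) 1 0 * 85 + (delta13 ^ n) 1 1 * 13 := by
      rw [hd] at *; simpa [delta13] using e.2.2.1
    have e11 : (delta13 ^ (n+1)) 1 1 = (delta13 ^ n) 1 0 * 13 + (delta13 ^ n) 1 1 * 2 := by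
      rw [hd] at *; simpa [delta13] using e.2.2.2
    have h85 : (85 : ZMod 13) = 7 := by decide
    have h13 : (13 : ZMod 13) = 0 := by decide
    refine ⟨?_, ?_, ?_, ?_⟩
    · rw [e00]; push_cast; rw [h1, h2, h85, pow_succ]; ring
    · rw [e01]; push_cast; rw [h1, h2, h13]; ring
    · rw [e10]; push_cast; rw [h3, h4, h13]; ring
    · rw [e11]; push_cast; rw [h3, h4, h13, pow_succ]; ring

lemma seven_primitive : ∀ a : ZMod 13, a ≠ 0 → ∃ k : Fin 12, a = 7 ^ (k : ℕ) := by decide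


/-- `Γ₀⁰(13)` is generated by the principal congruence subgroup `Γ(13)` together with `δ₁₃`. -/
theorem gamma00_thirteen_eq_closure :
    Gamma00 13 = Subgroup.closure ((Gamma 13 : Set SL(2, ℤ)) ∪ {delta13}) := by
  apply le_antisymm
  · intro g hg
    obtain ⟨hb, hc⟩ : (g 0 1 : ZMod 13) = 0 ∧ (g 1 0 : ZMod 13) = 0 := hg
    have hdet : g 0 0 * g 1 1 - g 0 1 * g 1 0 = 1 := by
      have := g.2; rwa [Matrix.det_fin_two] at this
    have had : (g 0 0 : ZMod 13) * (g 1 1 : ZMod 13) = 1 := by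
      have : ((g 0 0 * g 1 1 - g 0 1 * g 1 0 : ℤ) : ZMod 13) = 1 := by rw [hdet]; exact Int.cast_one
      push_cast at this
      rwa [hb, hc, mul_zero, sub_zero] at this
    have ha : (g 0 0 : ZMod 13) ≠ 0 := by
      intro h; rw [h, zero_mul] at had; exact absurd had (by decide)
    obtain ⟨k, hk⟩ := seven_primitive _ ha
    set m : SL(2, ℤ) := delta13 ^ (k : ℕ) with hm
    obtain ⟨m1, m2, m3, m4⟩ := delta13_pow_entries (k : ℕ)
    have hinv := Matrix.SpecialLinearGroup.SL2_inv_expl m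
    have hmul := Matrix.two_mul_expl g.1 (m⁻¹).1
    have i00 : (m⁻¹) 0 0 = m 1 1 := by rw [hinv]; rfl
    have i01 : (m⁻¹) 0 1 = -(m 0 1) := by rw [hinv]; rfl
    have i10 : (m⁻¹) 1 0 = -(m 1 0) := by rw [hinv]; rfl
    have i11 : (m⁻¹) 1 1 = m 0 0 := by rw [hinv]; rfl
    have h14 : (7 : ZMod 13) * 2 = 1 := by decide
    have hGamma : g * m⁻¹ ∈ Gamma 13 := by
      rw [Gamma_mem]
      refine ⟨?_, ?_, ?_, ?_⟩
      · show (((g : Matrix (Fin 2) (Fin 2) ℤ) * (m⁻¹ : SL(2,ℤ))) 0 0 : ZMod 13) = 1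
        rw [hmul.1, i00, i10]
        push_cast
        rw [m4, m3, hk, neg_zero, mul_zero, add_zero, ← mul_pow, h14, one_pow]
      · show (((g : Matrix (Fin 2) (Fin 2) ℤ) * (m⁻¹ : SL(2,ℤ))) 0 1 : ZMod 13) = 0
        rw [hmul.2.1, i01, i11]
        push_cast
        rw [m2, hb, neg_zero, mul_zero, zero_mul, add_zero]
      · show (((g : Matrix (Fin 2) (Fin 2) ℤ) * (m⁻¹ : SL(2,ℤ))) 1 0 : ZMod 13) = 0
        rw [hmul.2.2.1, i00, i10]
        push_cast
        rw [m3, hc, neg_zero, mul_zero, zero_mul, add_zero]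
      · show (((g : Matrix (Fin 2) (Fin 2) ℤ) * (m⁻¹ : SL(2,ℤ))) 1 1 : ZMod 13) = 1
        rw [hmul.2.2.2, i01, i11]
        push_cast
        rw [m2, m1, hc, neg_zero, mul_zero, zero_add, ← hk]
        linear_combination had
    have hδ : delta13 ∈ Subgroup.closure ((Gamma 13 : Set SL(2, ℤ)) ∪ {delta13}) :=
      Subgroup.subset_closure (Set.mem_union_right _ (Set.mem_singleton _))
    have hmem : m ∈ Subgroup.closure ((Gamma 13 : Set SL(2, ℤ)) ∪ {delta13}) := by
      rw [hm]; exact pow_mem hδ _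
    have hg2 : g = (g * m⁻¹) * m := (inv_mul_cancel_right g m).symm
    rw [hg2]
    exact Subgroup.mul_mem _ (Subgroup.subset_closure (Set.mem_union_left _ hGamma)) hmem
  · rw [Subgroup.closure_le]
    rintro x (hx | hx)
    · have h := Gamma_mem.mp hx
      exact ⟨h.2.1, h.2.2.1⟩
    · rw [Set.mem_singleton_iff] at hx
      subst hx
      constructor <;>
      · show ((13 : ℤ) : ZMod 13) = 0
        decide
end

section
/- Let δ₇ = [[2,7],[7,25]], α = [[3,2],[−5,−3]] and β = δ₇·α⁻¹ = [[1,3],[−1,−2]] in SL(2,ℤ). Denote by δ̄₇, ᾱ, β̄ their images in PSL(2, ℤ/7). Then β̄³ = ᾱ² = (β̄·ᾱ)³ = 1, and the subgroup of PSL(2, ℤ/7) generated by δ̄₇ and ᾱ is isomorphic to the alternating group A₄ on four letters. -/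
open Matrix
open scoped MatrixGroups

/-- Reduction of `SL(2, ℤ)` modulo `p`, followed by the quotient map to `PSL(2, ℤ/p)`. -/
def toPSL (p : ℕ) : SL(2, ℤ) →* PSL(2, ZMod p) :=
  (QuotientGroup.mk' (Subgroup.center (SpecialLinearGroup (Fin 2) (ZMod p)))).comp
    (Matrix.SpecialLinearGroup.map (Int.castRingHom (ZMod p)))

/-- `α = [[3,2],[−5,−3]] ∈ SL(2, ℤ)`. -/
def alpha : SL(2, ℤ) := ⟨!![3, 2; -5, -3], by norm_num [Matrix.det_fin_two_of]⟩

/-- `β = [[1,3],[−1,−2]] ∈ SL(2, ℤ)`. -/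
def beta : SL(2, ℤ) := ⟨!![1, 3; -1, -2], by norm_num [Matrix.det_fin_two_of]⟩

abbrev SL7 := Matrix.SpecialLinearGroup (Fin 2) (ZMod 7)

instance decCenter7 : DecidablePred (· ∈ Subgroup.center SL7) := fun A =>
  decidable_of_iff (∃ r : ZMod 7, r ^ 2 = 1 ∧ Matrix.scalar (Fin 2) r = (A : Matrix (Fin 2) (Fin 2) (ZMod 7)))
    (by show _ ↔ A ∈ Subgroup.center SL7
        rw [Matrix.SpecialLinearGroup.mem_center_iff]; simp)

def m7 (a b c d : ZMod 7) (h : (!![a, b; c, d]).det = 1 := by decide) : SL7 := ⟨_, h⟩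

def q7 (x : SL7) : PSL(2, ZMod 7) := QuotientGroup.mk x

instance decEqPSL7 : DecidableEq (PSL(2, ZMod 7)) :=
  @Quotient.decidableEq SL7 (QuotientGroup.leftRel (Subgroup.center SL7))
    (fun a b => decidable_of_iff (a⁻¹ * b ∈ Subgroup.center SL7)
      (QuotientGroup.leftRel_apply.symm))

open Equiv in
/-- lookup table realizing `A₄` inside `PSL(2, 7)`. -/
def g (σ : Equiv.Perm (Fin 4)) : PSL(2, ZMod 7) :=
  if σ = 1 then 1
  else if σ = swap 0 1 * swap 2 3 then q7 (m7 3 2 2 4)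
  else if σ = swap 0 1 * swap 1 2 then q7 (m7 1 3 6 5)
  else if σ = swap 1 3 * swap 3 2 then q7 (m7 1 5 5 5)
  else if σ = swap 0 2 * swap 2 3 then q7 (m7 2 0 0 4)
  else if σ = swap 0 2 * swap 2 1 then q7 (m7 2 3 6 6)
  else if σ = swap 0 3 * swap 3 1 then q7 (m7 1 6 3 5)
  else if σ = swap 0 3 * swap 3 2 then q7 (m7 3 0 0 5)
  else if σ = swap 0 1 * swap 1 3 then q7 (m7 2 6 3 6)
  else if σ = swap 1 2 * swap 2 3 then q7 (m7 2 5 5 6)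
  else if σ = swap 0 3 * swap 1 2 then q7 (m7 3 1 4 4)
  else if σ = swap 0 2 * swap 1 3 then q7 (m7 3 4 1 4)
  else 1

def phi : alternatingGroup (Fin 4) →* PSL(2, ZMod 7) :=
  MonoidHom.mk' (fun x => g x.val) (by decide)


theorem phi_list (y : alternatingGroup (Fin 4)) :
    phi y = 1 ∨ phi y = toPSL 7 alpha ∨ phi y = toPSL 7 beta ∨
    phi y = toPSL 7 alpha * toPSL 7 beta ∨ phi y = toPSL 7 beta * toPSL 7 alpha ∨
    phi y = toPSL 7 beta * toPSL 7 beta ∨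
    phi y = toPSL 7 alpha * toPSL 7 beta * toPSL 7 alpha ∨
    phi y = toPSL 7 alpha * toPSL 7 beta * toPSL 7 beta ∨
    phi y = toPSL 7 beta * toPSL 7 alpha * toPSL 7 beta ∨
    phi y = toPSL 7 beta * toPSL 7 beta * toPSL 7 alpha ∨
    phi y = toPSL 7 beta * toPSL 7 alpha * toPSL 7 beta * toPSL 7 beta ∨
    phi y = toPSL 7 beta * toPSL 7 beta * toPSL 7 alpha * toPSL 7 beta := by
  revert y; decide

theorem phi_inj : Function.Injective phi := by
  intro x y h
  exact (by decide : ∀ x y : alternatingGroup (Fin 4), phi x = phi y → x = y) x y h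

open Equiv in
/-- In `PSL(2, ℤ/7)`, `β̄ = δ̄₇·ᾱ⁻¹`, the relations `β̄³ = ᾱ² = (β̄·ᾱ)³ = 1` hold, and the
subgroup generated by `δ̄₇` and `ᾱ` is isomorphic to the alternating group `A₄`. -/
theorem closure_delta7_alpha_eq_A4 :
    toPSL 7 beta = toPSL 7 delta7 * (toPSL 7 alpha)⁻¹ ∧
      (toPSL 7 beta) ^ 3 = 1 ∧ (toPSL 7 alpha) ^ 2 = 1 ∧
      (toPSL 7 beta * toPSL 7 alpha) ^ 3 = 1 ∧
      Nonempty ((Subgroup.closure {toPSL 7 delta7, toPSL 7 alpha}) ≃*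
        alternatingGroup (Fin 4)) := by
  refine ⟨by decide, by decide, by decide, by decide, ?_⟩
  set K := Subgroup.closure {toPSL 7 delta7, toPSL 7 alpha} with hK
  have hd : toPSL 7 delta7 ∈ K := Subgroup.subset_closure (Set.mem_insert _ _)
  have ha : toPSL 7 alpha ∈ K :=
    Subgroup.subset_closure (Set.mem_insert_of_mem _ rfl)
  have hb : toPSL 7 beta ∈ K := by
    have h : toPSL 7 beta = toPSL 7 delta7 * (toPSL 7 alpha)⁻¹ := by decide
    rw [h]; exact mul_mem hd (inv_mem ha)
  have h1 : phi.range ≤ K := by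
    rintro x ⟨y, rfl⟩
    rcases phi_list y with h|h|h|h|h|h|h|h|h|h|h|h <;> rw [h]
    exacts [one_mem K, ha, hb, mul_mem ha hb, mul_mem hb ha, mul_mem hb hb,
      mul_mem (mul_mem ha hb) ha, mul_mem (mul_mem ha hb) hb,
      mul_mem (mul_mem hb ha) hb, mul_mem (mul_mem hb hb) ha,
      mul_mem (mul_mem (mul_mem hb ha) hb) hb, mul_mem (mul_mem (mul_mem hb hb) ha) hb]
  have h2 : K ≤ phi.range := by
    rw [hK, Subgroup.closure_le]
    rintro x (rfl|rfl)
    · exact ⟨⟨swap 0 2 * swap 2 3, by rw [Equiv.Perm.mem_alternatingGroup]; decide⟩, by decide⟩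
    · exact ⟨⟨swap 0 1 * swap 2 3, by rw [Equiv.Perm.mem_alternatingGroup]; decide⟩, by decide⟩
  have hr : phi.range = K := le_antisymm h1 h2
  exact ⟨((MulEquiv.subgroupCongr hr).symm.trans (MonoidHom.ofInjective phi_inj).symm)⟩
end

section
/- Let δ₇ = [[2,7],[7,25]], α = [[3,2],[−5,−3]] and S = [[0,−1],[1,0]] in SL(2,ℤ), and set α₁ = α·S, α₂ = δ₇·S, α₃ = S. Denote by ᾱ₁, ᾱ₂, ᾱ₃ the images of α₁, α₂, α₃ in PSL(2, ℤ/7). Then ᾱ₁² = ᾱ₂² = ᾱ₃² = (ᾱ₁ᾱ₂)³ = (ᾱ₂ᾱ₃)³ = (ᾱ₃ᾱ₁)² = 1 (the defining relations of the symmetric group S₄), and the subgroup of PSL(2, ℤ/7) generated by the images of δ₇, α and S is isomorphic to the symmetric group S₄ on four letters, and is a maximal proper subgroup of PSL(2, ℤ/7). -/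
open Matrix
open scoped MatrixGroups

/-- `S = [[0,−1],[1,0]] ∈ SL(2, ℤ)`. -/
def Smat : SL(2, ℤ) := ⟨!![0, -1; 1, 0], by norm_num [Matrix.det_fin_two_of]⟩

/-!
Sending the Coxeter generators `(0 1), (1 2), (2 3)` of `S₄` to `ᾱ₁ = ᾱS̄, ᾱ₂ = δ̄₇S̄, ᾱ₃ = S̄`
extends to an injective homomorphism `S₄ → PSL(2, ℤ/7)`, verified by computation. Its image is
generated by `ᾱS̄, δ̄₇S̄, S̄`, hence by `δ̄₇, ᾱ, S̄`. This subgroup has order `24` in a group of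
order `168`, so its index is the prime `7`, and a subgroup of prime index is maximal.
-/

open Equiv

namespace Matrix.SpecialLinearGroup

variable {R : Type*} [CommRing R] [IsDomain R]

theorem mem_center_iff_eq_one_or_eq_neg_one {A : SL(2, R)} :
    A ∈ Subgroup.center SL(2, R) ↔ A = 1 ∨ A = -1 := by
  have scalar_one : scalar (Fin 2) (1 : R) = ((1 : SL(2, R)) : Matrix (Fin 2) (Fin 2) R) := by
    rw [coe_one, map_one]
  have scalar_neg_one :
      scalar (Fin 2) (-1 : R) = ((-1 : SL(2, R)) : Matrix (Fin 2) (Fin 2) R) := by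
    rw [coe_neg, coe_one, map_neg, map_one]
  rw [mem_center_iff, Fintype.card_fin]
  constructor
  · rintro ⟨r, hr, hA⟩
    rcases sq_eq_one_iff.mp hr with rfl | rfl
    · exact Or.inl (Subtype.ext (hA.symm.trans scalar_one))
    · exact Or.inr (Subtype.ext (hA.symm.trans scalar_neg_one))
  · rintro (rfl | rfl)
    · exact ⟨1, one_pow 2, scalar_one⟩
    · exact ⟨-1, by norm_num, scalar_neg_one⟩

/- Mathlib's instances decide membership in a center by quantifying over the whole group, and
decide equality in a quotient group through a rewrite that blocks kernel reduction; these two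
reduce, so that `decide` can compute in `PSL(2, R)`. -/
instance [DecidableEq R] : DecidablePred (· ∈ Subgroup.center SL(2, R)) :=
  fun _ => decidable_of_iff' _ mem_center_iff_eq_one_or_eq_neg_one

instance [DecidableEq R] : DecidableEq PSL(2, R) := fun a b =>
  Quotient.recOnSubsingleton₂ a b fun _ _ => decidable_of_iff' _ QuotientGroup.eq

end Matrix.SpecialLinearGroup

theorem Subgroup.isCoatom_of_prime_index {G : Type*} [Group G] {H : Subgroup G}
    (hH : H.index.Prime) : IsCoatom H := by
  refine ⟨fun h => hH.ne_one (Subgroup.index_eq_one.mpr h), fun K hK => ?_⟩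
  rcases Nat.prime_mul_iff.mp ((Subgroup.relIndex_mul_index hK.le).symm ▸ hH) with
    ⟨-, hK_index⟩ | ⟨-, hHK_relIndex⟩
  · exact Subgroup.index_eq_one.mp hK_index
  · exact absurd (Subgroup.relIndex_eq_one.mp hHK_relIndex) hK.not_ge

theorem Subgroup.closure_mul_right_triple {G : Type*} [Group G] (a b c : G) :
    Subgroup.closure {a * c, b * c, c} = Subgroup.closure {a, b, c} := by
  simp only [le_antisymm_iff, Subgroup.closure_le, Set.insert_subset_iff,
    Set.singleton_subset_iff, SetLike.mem_coe]
  have mem {x : G} {s : Set G} (hx : x ∈ s) : x ∈ Subgroup.closure s := Subgroup.subset_closure hx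
  have hc : c ∈ Subgroup.closure {a * c, b * c, c} := mem (by simp)
  refine ⟨⟨mul_mem (mem (by simp)) (mem (by simp)), mul_mem (mem (by simp)) (mem (by simp)),
    mem (by simp)⟩, ?_, ?_, hc⟩
  · simpa using mul_mem (mem (by simp) : a * c ∈ _) (inv_mem hc)
  · simpa using mul_mem (mem (by simp) : b * c ∈ _) (inv_mem hc)

theorem Equiv.Perm.closure_swap_zero_one_swap_one_two_swap_two_three :
    Subgroup.closure {swap (0 : Fin 4) 1, swap 1 2, swap 2 3} = ⊤ := by
  rw [← Subgroup.closure_eq_top_of_mclosure_eq_top (Perm.mclosure_swap_castSucc_succ 3)]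
  congr 1
  ext σ
  simp [Fin.exists_fin_succ, eq_comm]

instance : Fact (Nat.Prime 7) := ⟨by norm_num⟩

set_option maxRecDepth 10000 in
theorem card_PSL_two_zmod_seven : Nat.card PSL(2, ZMod 7) = 168 := by
  have card_SL : Nat.card SL(2, ZMod 7) = 336 := by rw [Nat.card_eq_fintype_card]; decide
  have card_center : Nat.card (Subgroup.center SL(2, ZMod 7)) = 2 := by
    rw [Nat.card_eq_fintype_card]; decide
  have := Subgroup.card_eq_card_quotient_mul_card_subgroup (Subgroup.center SL(2, ZMod 7))
  rw [card_SL, card_center] at this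
  change 336 = Nat.card PSL(2, ZMod 7) * 2 at this
  omega

def psl7OfEntries (a b c d : ZMod 7) (h : (!![a, b; c, d]).det = 1 := by decide) :
    PSL(2, ZMod 7) :=
  QuotientGroup.mk ⟨!![a, b; c, d], h⟩

/- Keyed by `(σ 0, σ 1, σ 2)`, which determines `σ`; the value at `σ` is the product of the images
`(0 1) ↦ ᾱS̄, (1 2) ↦ δ̄₇S̄, (2 3) ↦ S̄` along a word for `σ` in these transpositions. -/
def permFourToPSL7 : Perm (Fin 4) →* PSL(2, ZMod 7) where
  toFun σ := match (σ 0).val, (σ 1).val, (σ 2).val with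
  | 0, 1, 2 => psl7OfEntries 1 0 0 1
  | 0, 1, 3 => psl7OfEntries 0 1 6 0
  | 0, 2, 1 => psl7OfEntries 0 2 3 0
  | 0, 2, 3 => psl7OfEntries 2 0 0 4
  | 0, 3, 1 => psl7OfEntries 3 0 0 5
  | 0, 3, 2 => psl7OfEntries 0 3 2 0
  | 1, 0, 2 => psl7OfEntries 2 4 4 5
  | 1, 0, 3 => psl7OfEntries 3 2 2 4
  | 1, 2, 0 => psl7OfEntries 2 3 6 6
  | 1, 2, 3 => psl7OfEntries 3 5 6 1
  | 1, 3, 0 => psl7OfEntries 1 1 2 3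
  | 1, 3, 2 => psl7OfEntries 1 6 3 5
  | 2, 0, 1 => psl7OfEntries 1 3 6 5
  | 2, 0, 3 => psl7OfEntries 3 6 5 1
  | 2, 1, 0 => psl7OfEntries 2 2 1 5
  | 2, 1, 3 => psl7OfEntries 2 5 5 6
  | 2, 3, 0 => psl7OfEntries 3 1 4 4
  | 2, 3, 1 => psl7OfEntries 1 4 4 3
  | 3, 0, 1 => psl7OfEntries 1 2 1 3
  | 3, 0, 2 => psl7OfEntries 2 6 3 6
  | 3, 1, 0 => psl7OfEntries 1 5 5 5
  | 3, 1, 2 => psl7OfEntries 2 1 2 5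
  | 3, 2, 0 => psl7OfEntries 3 3 3 1
  | 3, 2, 1 => psl7OfEntries 3 4 1 4
  | _, _, _ => 1
  map_one' := by decide
  map_mul' := by decide

theorem permFourToPSL7_injective : Function.Injective permFourToPSL7 :=
  (injective_iff_map_eq_one _).mpr (by decide)

theorem range_permFourToPSL7 :
    permFourToPSL7.range = Subgroup.closure {toPSL 7 delta7, toPSL 7 alpha, toPSL 7 Smat} := by
  have image_swap_zero_one : permFourToPSL7 (swap 0 1) = toPSL 7 alpha * toPSL 7 Smat := by
    decide
  have image_swap_one_two : permFourToPSL7 (swap 1 2) = toPSL 7 delta7 * toPSL 7 Smat := by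
    decide
  have image_swap_two_three : permFourToPSL7 (swap 2 3) = toPSL 7 Smat := by decide
  rw [MonoidHom.range_eq_map, ← Perm.closure_swap_zero_one_swap_one_two_swap_two_three,
    MonoidHom.map_closure, Set.image_insert_eq, Set.image_insert_eq, Set.image_singleton,
    image_swap_zero_one, image_swap_one_two, image_swap_two_three,
    Subgroup.closure_mul_right_triple, Set.insert_comm]

/-- With `α₁ = α·S`, `α₂ = δ₇·S`, `α₃ = S`, the images `ᾱ₁, ᾱ₂, ᾱ₃` in `PSL(2, ℤ/7)` satisfy
the defining relations of `S₄`, and the subgroup of `PSL(2, ℤ/7)` generated by the images of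
`δ₇`, `α` and `S` is isomorphic to `S₄` and is a maximal proper subgroup. -/
theorem closure_delta7_alpha_S_eq_S4 :
    (toPSL 7 (alpha * Smat)) ^ 2 = 1 ∧ (toPSL 7 (delta7 * Smat)) ^ 2 = 1 ∧
      (toPSL 7 Smat) ^ 2 = 1 ∧
      (toPSL 7 (alpha * Smat) * toPSL 7 (delta7 * Smat)) ^ 3 = 1 ∧
      (toPSL 7 (delta7 * Smat) * toPSL 7 Smat) ^ 3 = 1 ∧
      (toPSL 7 Smat * toPSL 7 (alpha * Smat)) ^ 2 = 1 ∧
      Nonempty ((Subgroup.closure {toPSL 7 delta7, toPSL 7 alpha, toPSL 7 Smat}) ≃*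
        Equiv.Perm (Fin 4)) ∧
      IsCoatom (Subgroup.closure {toPSL 7 delta7, toPSL 7 alpha, toPSL 7 Smat}) := by
  set H := Subgroup.closure {toPSL 7 delta7, toPSL 7 alpha, toPSL 7 Smat}
  have iso : H ≃* Perm (Fin 4) :=
    (MulEquiv.subgroupCongr range_permFourToPSL7).symm.trans
      (MonoidHom.ofInjective permFourToPSL7_injective).symm
  have card_H : Nat.card H = 24 := by
    rw [Nat.card_congr iso.toEquiv, Nat.card_perm, Nat.card_fin]; rfl
  have index_H : H.index = 7 := by
    have := H.card_mul_index
    rw [card_H, card_PSL_two_zmod_seven] at this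
    omega
  exact ⟨by decide, by decide, by decide, by decide, by decide, by decide, ⟨iso⟩,
    Subgroup.isCoatom_of_prime_index (by rw [index_H]; norm_num)⟩
end

section
/- Let α = [[3,2],[−5,−3]], α′ = [[−4,1],[−5,1]] and S = [[0,−1],[1,0]] in SL(2,ℤ), and set β₁ = S, β₂ = S·α′. Denote images in PSL(2, ℤ/7) by bars. Then: (a) ᾱ has order 2 and ᾱ′ has order 4 in PSL(2, ℤ/7); (b) β̄₁² = β̄₂³ = (β̄₁β̄₂)⁴ = 1 (the defining relations of the symmetric group S₄); (c) the subgroup of PSL(2, ℤ/7) generated by the images of α′ and S is isomorphic to the symmetric group S₄ on four letters. -/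
open Matrix
open scoped MatrixGroups

/-- `α′ = [[−4,1],[−5,1]] ∈ SL(2, ℤ)`. -/
def alpha' : SL(2, ℤ) := ⟨!![-4, 1; -5, 1], by norm_num [Matrix.det_fin_two_of]⟩

namespace S4Aux

abbrev G7 := Matrix.SpecialLinearGroup (Fin 2) (ZMod 7)

instance : DecidableEq G7 := fun a b =>
  decidable_of_iff (Subtype.val a = Subtype.val b) Subtype.ext_iff.symm

lemma center7 {x : G7} : x ∈ Subgroup.center G7 ↔ x = 1 ∨ x = -1 := by
  rw [Matrix.SpecialLinearGroup.mem_center_iff]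
  constructor
  · rintro ⟨r, hr, hrx⟩
    have hr' : ∀ r : ZMod 7, r ^ (Fintype.card (Fin 2)) = 1 → r = 1 ∨ r = -1 := by decide
    rcases hr' r hr with h | h
    · subst h
      exact Or.inl (Subtype.coe_injective (hrx.symm.trans (by decide)))
    · subst h
      exact Or.inr (Subtype.coe_injective (hrx.symm.trans (by decide)))
  · rintro (rfl | rfl)
    · exact ⟨1, one_pow _, by decide⟩
    · exact ⟨-1, by decide, by decide⟩

lemma mk_eq_iff (a b : G7) :
    (QuotientGroup.mk a : PSL(2, ZMod 7)) = QuotientGroup.mk b ↔ b = a ∨ b = -a := by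
  rw [QuotientGroup.eq, center7]
  constructor
  · rintro (h | h)
    · left; exact (inv_mul_eq_one.mp h).symm
    · right
      have := eq_mul_of_inv_mul_eq h
      rwa [mul_neg_one] at this
  · rintro (rfl | rfl)
    · left; exact inv_mul_cancel _
    · right; rw [mul_neg, inv_mul_cancel]

lemma mk_eq_one_iff (a : G7) :
    (QuotientGroup.mk a : PSL(2, ZMod 7)) = 1 ↔ a = 1 ∨ a = -1 := by
  rw [QuotientGroup.eq_one_iff, center7]

lemma toPSL_eq (A : SL(2, ℤ)) :
    toPSL 7 A = QuotientGroup.mk (Matrix.SpecialLinearGroup.map (Int.castRingHom (ZMod 7)) A) :=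
  rfl

/-- Lookup table for the isomorphism `S₄ → PSL(2, 7)`, indexed by `σ 0 * 16 + σ 1 * 4 + σ 2`. -/
def tab : ℕ → G7
  | 6 => ⟨!![1,0;0,1], by decide⟩
  | 7 => ⟨!![2,3;3,5], by decide⟩
  | 9 => ⟨!![0,3;2,0], by decide⟩
  | 11 => ⟨!![2,1;4,6], by decide⟩
  | 13 => ⟨!![1,1;4,5], by decide⟩
  | 14 => ⟨!![2,6;5,5], by decide⟩
  | 18 => ⟨!![0,1;6,0], by decide⟩
  | 19 => ⟨!![3,5;5,4], by decide⟩
  | 24 => ⟨!![2,0;0,4], by decide⟩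
  | 27 => ⟨!![3,1;2,1], by decide⟩
  | 28 => ⟨!![3,2;1,1], by decide⟩
  | 30 => ⟨!![2,2;2,6], by decide⟩
  | 33 => ⟨!![3,0;0,5], by decide⟩
  | 35 => ⟨!![1,5;6,3], by decide⟩
  | 36 => ⟨!![0,2;3,0], by decide⟩
  | 39 => ⟨!![1,4;1,5], by decide⟩
  | 44 => ⟨!![3,3;6,4], by decide⟩
  | 45 => ⟨!![1,3;3,3], by decide⟩
  | 49 => ⟨!![1,6;5,3], by decide⟩
  | 50 => ⟨!![1,2;2,5], by decide⟩
  | 52 => ⟨!![2,4;1,6], by decide⟩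
  | 54 => ⟨!![2,5;6,5], by decide⟩
  | 56 => ⟨!![3,4;4,1], by decide⟩
  | 57 => ⟨!![3,6;3,4], by decide⟩
  | _ => 1

def phi (σ : Equiv.Perm (Fin 4)) : G7 :=
  tab ((σ 0).val * 16 + (σ 1).val * 4 + (σ 2).val)

lemma phi_mul (σ τ : Equiv.Perm (Fin 4)) :
    phi (σ * τ) = phi σ * phi τ ∨ phi (σ * τ) = -(phi σ * phi τ) := by
  revert σ τ; decide

lemma phi_ker (σ : Equiv.Perm (Fin 4)) : (phi σ = 1 ∨ phi σ = -1) → σ = 1 := by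
  revert σ; decide

/-- The homomorphism `S₄ →* PSL(2, 7)`. -/
def Phi : Equiv.Perm (Fin 4) →* PSL(2, ZMod 7) :=
  MonoidHom.mk' (fun σ => QuotientGroup.mk (phi σ)) (by
    intro σ τ
    show (QuotientGroup.mk (phi (σ * τ)) : PSL(2, ZMod 7)) =
      QuotientGroup.mk (phi σ) * QuotientGroup.mk (phi τ)
    rcases phi_mul σ τ with h | h
    · rw [h, QuotientGroup.mk_mul]
    · rw [h, ← QuotientGroup.mk_mul]
      exact (mk_eq_iff _ _).mpr (Or.inr (neg_neg _).symm))

lemma Phi_apply (σ : Equiv.Perm (Fin 4)) : Phi σ = QuotientGroup.mk (phi σ) := rfl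

lemma Phi_inj : Function.Injective Phi := by
  refine (injective_iff_map_eq_one Phi).mpr fun σ h => ?_
  rw [Phi_apply, mk_eq_one_iff] at h
  exact phi_ker σ h

lemma Phi_cycle : Phi (finRotate 4) = toPSL 7 alpha' := by
  rw [Phi_apply, toPSL_eq, mk_eq_iff]
  decide

lemma Phi_swap : Phi (Equiv.swap 0 1) = toPSL 7 Smat := by
  rw [Phi_apply, toPSL_eq, mk_eq_iff]
  decide

lemma perm_top : Subgroup.closure ({finRotate 4, Equiv.swap 0 1} : Set (Equiv.Perm (Fin 4))) = ⊤ := by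
  have h := Equiv.Perm.closure_cycle_adjacent_swap (isCycle_finRotate (n := 2))
    (support_finRotate (n := 2)) 0
  have hs : Equiv.swap (0 : Fin 4) ((finRotate 4) 0) = Equiv.swap 0 1 := by decide
  rwa [hs] at h

lemma Phi_range : Phi.range = Subgroup.closure {toPSL 7 alpha', toPSL 7 Smat} := by
  rw [MonoidHom.range_eq_map, ← perm_top, MonoidHom.map_closure]
  congr 1
  rw [Set.image_insert_eq, Set.image_singleton, Phi_cycle, Phi_swap]

end S4Aux

open S4Aux in
/-- In `PSL(2, ℤ/7)`: `ᾱ` has order 2 and `ᾱ′` has order 4; with `β₁ = S`, `β₂ = S·α′` the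
relations `β̄₁² = β̄₂³ = (β̄₁·β̄₂)⁴ = 1` (the defining relations of `S₄`) hold; and the subgroup
generated by the images of `α′` and `S` is isomorphic to the symmetric group `S₄`. -/
theorem closure_alpha'_S_eq_S4 :
    orderOf (toPSL 7 alpha) = 2 ∧ orderOf (toPSL 7 alpha') = 4 ∧
      (toPSL 7 Smat) ^ 2 = 1 ∧ (toPSL 7 (Smat * alpha')) ^ 3 = 1 ∧
      (toPSL 7 Smat * toPSL 7 (Smat * alpha')) ^ 4 = 1 ∧
      Nonempty ((Subgroup.closure {toPSL 7 alpha', toPSL 7 Smat}) ≃* Equiv.Perm (Fin 4)) := by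
  refine ⟨?_, ?_, ?_, ?_, ?_, ?_⟩
  · refine orderOf_eq_prime ?_ ?_
    · rw [← map_pow, toPSL_eq, mk_eq_one_iff]; decide
    · intro h
      rw [toPSL_eq, mk_eq_one_iff] at h
      exact absurd h (by decide)
  · rw [orderOf_eq_iff (by norm_num)]
    constructor
    · rw [← map_pow, toPSL_eq, mk_eq_one_iff]; decide
    · intro m hm hm'
      interval_cases m <;>
        · intro h
          rw [← map_pow, toPSL_eq, mk_eq_one_iff] at h
          exact absurd h (by decide)
  · rw [← map_pow, toPSL_eq, mk_eq_one_iff]; decide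
  · rw [← map_pow, toPSL_eq, mk_eq_one_iff]; decide
  · rw [← _root_.map_mul, ← map_pow, toPSL_eq, mk_eq_one_iff]; decide
  · exact ⟨(MulEquiv.subgroupCongr Phi_range.symm).trans (MonoidHom.ofInjective Phi_inj).symm⟩
end
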